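/- arXiv:1803.05093 — 3 statements merged into one kernel-verified Lean document; each statement's English description precedes it below -/
import Mathlib

section
/- For every δ ≥ 0, let T_δ be the spanning subgraph of G whose edges are the negative edges e with pers(e) ≤ δ. Then every connected component C of T_δ contains exactly one vertex that is either unpaired or paired with persistence strictly greater than δ, namely the vertex of C minimizing f (the 'sink' of C). -/
/-!
For a negative edge `e` and an upper set `S` of values, the negative edges `e' ≺ e` whose
vertex `m(e')` has value in `S` join every vertex `x` either to the minimum of its component
in `G_{≺e}` or to a vertex with value outside `S`; this follows by induction along `≺`, adding
one edge at a time. Since `≺` refines `f̄`, all these edges have persistence at most `pers(e)`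
once `S ⊆ [f(m(e)), ∞)`, so they lie in `T_δ` whenever `e` does.

If the minimum `u` of a component of `T_δ` were `m(e)` for an edge `e` of `T_δ`, such paths
would join `u` inside `T_δ` to a strictly smaller vertex. Conversely, for any other vertex `w`
of the component, the first edge `e` (in `≺`) at which `w` becomes joined in `T_δ` to a smaller
vertex satisfies `m(e) = w`: otherwise the same paths would reach a smaller vertex earlier.
-/

open SimpleGraph

/-- The function value of an edge: the larger of the values of its two endpoints. -/
noncomputable def fbar {V : Type*} (f : V → ℝ) : Sym2 V → ℝ :=
  Sym2.lift ⟨fun u w => max (f u) (f w), fun u w => max_comm (f u) (f w)⟩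

/-- The spanning subgraph `G_{≺e}` of `G` whose edges are exactly the edges `e'` of `G`
with `e' ≺ e`. -/
def Gbelow {V : Type*} (G : SimpleGraph V) (lt : Sym2 V → Sym2 V → Prop) (e : Sym2 V) :
    SimpleGraph V :=
  SimpleGraph.fromEdgeSet {e' | e' ∈ G.edgeSet ∧ lt e' e}

/-- An edge `e` of `G` is negative if its two endpoints lie in different connected
components of `G_{≺e}`. -/
def IsNegEdge {V : Type*} (G : SimpleGraph V) (lt : Sym2 V → Sym2 V → Prop) (e : Sym2 V) :
    Prop :=
  e ∈ G.edgeSet ∧ ∃ u w : V, e = s(u, w) ∧ ¬ (Gbelow G lt e).Reachable u w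

/-- An edge `e` of `G` is positive if it is not negative. -/
def IsPosEdge {V : Type*} (G : SimpleGraph V) (lt : Sym2 V → Sym2 V → Prop) (e : Sym2 V) :
    Prop :=
  e ∈ G.edgeSet ∧ ¬ IsNegEdge G lt e

/-- The `f`-minimizing vertex of the connected component of `u` in the graph `H`. -/
noncomputable def compMin {V : Type*} [Fintype V] (f : V → ℝ) (H : SimpleGraph V) (u : V) :
    V := by
  classical
  exact Classical.choose (Finset.exists_min_image
    (Finset.univ.filter fun v => H.Reachable u v) f
    ⟨u, Finset.mem_filter.mpr ⟨Finset.mem_univ u, SimpleGraph.Reachable.refl u⟩⟩)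

/-- The vertex `m(e)` paired with a negative edge `e` by the elder rule: of the two
`f`-minimizing vertices of the components (in `G_{≺e}`) of the endpoints of `e`, the one
with the larger `f`-value. -/
noncomputable def pairVert {V : Type*} [Fintype V] (G : SimpleGraph V) (f : V → ℝ)
    (hf : Function.Injective f) (lt : Sym2 V → Sym2 V → Prop) (e : Sym2 V) : V :=
  Sym2.lift ⟨fun u w =>
      if f (compMin f (Gbelow G lt e) u) < f (compMin f (Gbelow G lt e) w)
      then compMin f (Gbelow G lt e) w
      else compMin f (Gbelow G lt e) u, by
    intro u w
    dsimp only
    rcases lt_trichotomy (f (compMin f (Gbelow G lt e) u)) (f (compMin f (Gbelow G lt e) w))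
      with h | h | h
    · rw [if_pos h, if_neg (lt_asymm h)]
    · rw [hf h]
    · rw [if_neg (lt_asymm h), if_pos h]⟩ e

/-- The persistence of a negative edge `e`: `f̄(e) - f(m(e))`. -/
noncomputable def persE {V : Type*} [Fintype V] (G : SimpleGraph V) (f : V → ℝ)
    (hf : Function.Injective f) (lt : Sym2 V → Sym2 V → Prop) (e : Sym2 V) : ℝ :=
  fbar f e - f (pairVert G f hf lt e)

open Set

structure IsStrictTotalOrderOn {α : Type*} (r : α → α → Prop) (s : Set α) : Prop where
  irrefl : ∀ a ∈ s, ¬ r a a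
  trans : ∀ a ∈ s, ∀ b ∈ s, ∀ c ∈ s, r a b → r b c → r a c
  total : ∀ a ∈ s, ∀ b ∈ s, a ≠ b → r a b ∨ r b a

namespace IsStrictTotalOrderOn

variable {α : Type*} {r : α → α → Prop} {s : Set α}

theorem swap (h : IsStrictTotalOrderOn r s) : IsStrictTotalOrderOn (flip r) s :=
  ⟨h.irrefl, fun a ha b hb c hc hab hbc => h.trans c hc b hb a ha hbc hab,
    fun a ha b hb hne => (h.total a ha b hb hne).symm⟩

theorem wellFounded [Finite α] (h : IsStrictTotalOrderOn r s) :
    WellFounded fun a b => a ∈ s ∧ b ∈ s ∧ r a b := by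
  have : IsTrans α fun a b => a ∈ s ∧ b ∈ s ∧ r a b :=
    ⟨fun a b c ⟨ha, hb, hab⟩ ⟨_, hc, hbc⟩ => ⟨ha, hc, h.trans a ha b hb c hc hab hbc⟩⟩
  have : Std.Irrefl fun a b => a ∈ s ∧ b ∈ s ∧ r a b := ⟨fun a ⟨ha, _, haa⟩ => h.irrefl a ha haa⟩
  exact Finite.wellFounded_of_trans_of_irrefl _

theorem induction [Finite α] (h : IsStrictTotalOrderOn r s) {p : α → Prop}
    (step : ∀ a ∈ s, (∀ b ∈ s, r b a → p b) → p a) : ∀ a ∈ s, p a := fun a =>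
  h.wellFounded.induction (C := fun a => a ∈ s → p a) a fun a ih has =>
    step a has fun b hbs hba => ih b ⟨hbs, has, hba⟩ hbs

theorem exists_min [Finite α] (h : IsStrictTotalOrderOn r s) {t : Set α} (hts : t ⊆ s)
    (ht : t.Nonempty) : ∃ m ∈ t, ∀ a ∈ t, a ≠ m → r m a := by
  obtain ⟨m, hm, hmin⟩ := h.wellFounded.has_min t ht
  exact ⟨m, hm, fun a ha hne => (h.total m (hts hm) a (hts ha) hne.symm).resolve_right
    fun ham => hmin a ha ⟨hts ha, hts hm, ham⟩⟩

theorem exists_max [Finite α] (h : IsStrictTotalOrderOn r s) {t : Set α} (hts : t ⊆ s)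
    (ht : t.Nonempty) : ∃ m ∈ t, ∀ a ∈ t, a ≠ m → r a m :=
  h.swap.exists_min hts ht

end IsStrictTotalOrderOn

namespace SimpleGraph

variable {V : Type*}

theorem reachable_fromEdgeSet_insert {t : Set (Sym2 V)} {a b x y : V}
    (h : (fromEdgeSet (insert s(a, b) t)).Reachable x y) :
    (fromEdgeSet t).Reachable x y ∨
      ((fromEdgeSet t).Reachable x a ∧ (fromEdgeSet t).Reachable b y) ∨
      ((fromEdgeSet t).Reachable x b ∧ (fromEdgeSet t).Reachable a y) := by
  obtain ⟨p⟩ := h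
  induction p with
  | nil => exact .inl .rfl
  | @cons u v w huv _ ih =>
    rw [fromEdgeSet_adj, mem_insert_iff] at huv
    obtain ⟨hab | ht, hne⟩ := huv
    · rcases Sym2.eq_iff.mp hab with ⟨rfl, rfl⟩ | ⟨rfl, rfl⟩
      · rcases ih with h | ⟨-, h⟩ | ⟨-, h⟩
        exacts [.inr (.inl ⟨.rfl, h⟩), .inr (.inl ⟨.rfl, h⟩), .inl h]
      · rcases ih with h | ⟨-, h⟩ | ⟨-, h⟩
        exacts [.inr (.inr ⟨.rfl, h⟩), .inl h, .inr (.inr ⟨.rfl, h⟩)]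
    · have huv : (fromEdgeSet t).Reachable u v := ((fromEdgeSet_adj t).mpr ⟨ht, hne⟩).reachable
      rcases ih with h | ⟨h₁, h₂⟩ | ⟨h₁, h₂⟩
      exacts [.inl (huv.trans h), .inr (.inl ⟨huv.trans h₁, h₂⟩),
        .inr (.inr ⟨huv.trans h₁, h₂⟩)]

theorem exists_first_edge [Finite V] {r : Sym2 V → Sym2 V → Prop} {s : Set (Sym2 V)}
    (hr : IsStrictTotalOrderOn r s) {p : V → Prop} {x y : V} (hx : ¬ p x) (hy : p y)
    (hxy : (fromEdgeSet s).Reachable x y) :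
    ∃ e ∈ s, ∃ a b z, e = s(a, b) ∧ p z ∧
      (fromEdgeSet {e' | e' ∈ s ∧ r e' e}).Reachable x a ∧
      (fromEdgeSet {e' | e' ∈ s ∧ r e' e}).Reachable b z ∧
      ∀ w, (fromEdgeSet {e' | e' ∈ s ∧ r e' e}).Reachable x w → ¬ p w := by
  set A := {e | e ∈ s ∧ ∃ z, p z ∧ (fromEdgeSet (insert e {e' | e' ∈ s ∧ r e' e})).Reachable x z}
  have max_mem_A : ∀ t ⊆ s, ∀ z, p z → (fromEdgeSet t).Reachable x z → ∃ m ∈ t, m ∈ A := by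
    intro t hts z hz hxz
    rcases t.eq_empty_or_nonempty with rfl | ht
    · rw [fromEdgeSet_empty, reachable_bot] at hxz
      exact absurd (hxz ▸ hz) hx
    obtain ⟨m, hm, hmax⟩ := hr.exists_max hts ht
    refine ⟨m, hm, hts hm, z, hz, hxz.mono (fromEdgeSet_mono fun e he => ?_)⟩
    rcases eq_or_ne e m with rfl | hne
    exacts [mem_insert e _, .inr ⟨hts he, hmax e he hne⟩]
  obtain ⟨e, ⟨hes, z, hz, hxz⟩, hmin⟩ := hr.exists_min (t := A) (fun _ he => he.1) <| by
    obtain ⟨m, -, hm⟩ := max_mem_A s subset_rfl y hy hxy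
    exact ⟨m, hm⟩
  have hfirst : ∀ w, (fromEdgeSet {e' | e' ∈ s ∧ r e' e}).Reachable x w → ¬ p w := by
    intro w hxw hw
    obtain ⟨m, ⟨hms, hme⟩, hmA⟩ := max_mem_A _ (fun _ h => h.1) w hw hxw
    have hne : m ≠ e := by rintro rfl; exact hr.irrefl m hms hme
    exact hr.irrefl m hms (hr.trans m hms e hes m hms hme (hmin m hmA hne))
  induction e using Sym2.ind with | h a b => ?_
  rcases reachable_fromEdgeSet_insert hxz with h | ⟨h₁, h₂⟩ | ⟨h₁, h₂⟩
  · exact absurd hz (hfirst z h)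
  · exact ⟨_, hes, a, b, z, rfl, hz, h₁, h₂, hfirst⟩
  · exact ⟨_, hes, b, a, z, Sym2.eq_swap, hz, h₁, h₂, hfirst⟩

end SimpleGraph

section CompMin

variable {V : Type*} [Fintype V] {f : V → ℝ} {H H' : SimpleGraph V} {u v : V}

theorem compMin_reachable (f : V → ℝ) (H : SimpleGraph V) (u : V) :
    H.Reachable u (compMin f H u) := by
  classical
  exact (Finset.mem_filter.mp (Classical.choose_spec (Finset.exists_min_image
    (Finset.univ.filter (H.Reachable u)) f ⟨u, Finset.mem_filter.mpr ⟨Finset.mem_univ u, .rfl⟩⟩)).1).2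

theorem compMin_le (f : V → ℝ) (H : SimpleGraph V) (h : H.Reachable u v) :
    f (compMin f H u) ≤ f v := by
  classical
  exact (Classical.choose_spec (Finset.exists_min_image (Finset.univ.filter (H.Reachable u)) f
    ⟨u, Finset.mem_filter.mpr ⟨Finset.mem_univ u, .rfl⟩⟩)).2 v
    (Finset.mem_filter.mpr ⟨Finset.mem_univ v, h⟩)

theorem eq_compMin_of_reachable_of_le (hf : Function.Injective f) (h : H.Reachable u v)
    (hv : f v ≤ f (compMin f H u)) : v = compMin f H u :=
  hf (le_antisymm hv (compMin_le f H h))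

theorem compMin_eq_of_reachable (hf : Function.Injective f) (h : H.Reachable u v) :
    compMin f H u = compMin f H v :=
  eq_compMin_of_reachable_of_le hf (h.symm.trans (compMin_reachable f H u))
    (compMin_le f H (h.trans (compMin_reachable f H v)))

theorem reachable_of_compMin_eq (h : compMin f H u = compMin f H v) : H.Reachable u v :=
  (compMin_reachable f H u).trans (h ▸ (compMin_reachable f H v).symm)

theorem compMin_eq_of_le (hf : Function.Injective f) (hle : H ≤ H')
    (h : H.Reachable u (compMin f H' u)) : compMin f H u = compMin f H' u :=
  eq_compMin_of_reachable_of_le hf ((compMin_reachable f H u).mono hle) (compMin_le f H h)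

end CompMin

section EdgeOrder

variable {V : Type*} {G : SimpleGraph V} {f : V → ℝ} {lt : Sym2 V → Sym2 V → Prop}

theorem fbar_le_of_lt (hlt : IsStrictTotalOrderOn lt G.edgeSet)
    (hlt_refine : ∀ e₁ ∈ G.edgeSet, ∀ e₂ ∈ G.edgeSet, fbar f e₁ < fbar f e₂ → lt e₁ e₂)
    {e e' : Sym2 V} (he : e ∈ G.edgeSet) (he' : e' ∈ G.edgeSet) (h : lt e' e) :
    fbar f e' ≤ fbar f e :=
  not_lt.mp fun h' => hlt.irrefl e' he' (hlt.trans e' he' e he e' he' h (hlt_refine e he e' he' h'))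

theorem Gbelow_mono {e₁ e₂ : Sym2 V} (h : ∀ e ∈ G.edgeSet, lt e e₁ → lt e e₂) :
    Gbelow G lt e₁ ≤ Gbelow G lt e₂ :=
  fromEdgeSet_mono fun e he => ⟨he.1, h e he.1 he.2⟩

end EdgeOrder

section Elder

variable {V : Type*} [Fintype V] {G : SimpleGraph V} {f : V → ℝ} (hf : Function.Injective f)
  {lt : Sym2 V → Sym2 V → Prop}

theorem pairVert_eq_of_lt {e : Sym2 V} {a b : V} (hab : e = s(a, b))
    (h : f (compMin f (Gbelow G lt e) b) < f (compMin f (Gbelow G lt e) a)) :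
    pairVert G f hf lt e = compMin f (Gbelow G lt e) a := by
  subst hab
  simp only [pairVert, Sym2.lift_mk]
  exact if_neg h.not_gt

theorem pairVert_mk_mem (a b : V) :
    pairVert G f hf lt s(a, b) = compMin f (Gbelow G lt s(a, b)) a ∨
      pairVert G f hf lt s(a, b) = compMin f (Gbelow G lt s(a, b)) b := by
  simp only [pairVert, Sym2.lift_mk]
  split_ifs
  exacts [.inr rfl, .inl rfl]

theorem IsNegEdge.exists_pairVert_eq {e : Sym2 V} (he : IsNegEdge G lt e) :
    ∃ a b, e = s(a, b) ∧
      f (compMin f (Gbelow G lt e) a) < f (compMin f (Gbelow G lt e) b) ∧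
      pairVert G f hf lt e = compMin f (Gbelow G lt e) b := by
  obtain ⟨-, a, b, hab, hnab⟩ := he
  have hne : compMin f (Gbelow G lt e) a ≠ compMin f (Gbelow G lt e) b :=
    fun h => hnab (reachable_of_compMin_eq h)
  rcases (hf.ne hne).lt_or_gt with h | h
  · exact ⟨a, b, hab, h, pairVert_eq_of_lt hf (hab.trans Sym2.eq_swap) h⟩
  · exact ⟨b, a, hab.trans Sym2.eq_swap, h, pairVert_eq_of_lt hf hab h⟩

variable (G f lt)

def negBelow (e : Sym2 V) (S : Set ℝ) : SimpleGraph V :=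
  fromEdgeSet {e' | IsNegEdge G lt e' ∧ lt e' e ∧ f (pairVert G f hf lt e') ∈ S}

/-- The edges of `T_δ`. -/
def lowPersEdges (δ : ℝ) : Set (Sym2 V) :=
  {e | IsNegEdge G lt e ∧ persE G f hf lt e ≤ δ}

def NegPathsToMin (e : Sym2 V) : Prop :=
  ∀ S : Set ℝ, IsUpperSet S → ∀ x, ∃ y, (negBelow G f hf lt e S).Reachable x y ∧
    (f y ∈ S → y = compMin f (Gbelow G lt e) x)

variable {G f lt}

theorem negBelow_le_Gbelow (e : Sym2 V) (S : Set ℝ) :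
    negBelow G f hf lt e S ≤ Gbelow G lt e :=
  fromEdgeSet_mono fun _ he => ⟨he.1.1, he.2.1⟩

theorem negBelow_mono {e₁ e₂ : Sym2 V} {S₁ S₂ : Set ℝ} (h : ∀ e ∈ G.edgeSet, lt e e₁ → lt e e₂)
    (hS : S₁ ⊆ S₂) : negBelow G f hf lt e₁ S₁ ≤ negBelow G f hf lt e₂ S₂ :=
  fromEdgeSet_mono fun e he => ⟨he.1, h e he.1.1 he.2.1, hS he.2.2⟩

theorem negBelow_le_lowPers (hlt : IsStrictTotalOrderOn lt G.edgeSet)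
    (hlt_refine : ∀ e₁ ∈ G.edgeSet, ∀ e₂ ∈ G.edgeSet, fbar f e₁ < fbar f e₂ → lt e₁ e₂)
    {δ : ℝ} {e : Sym2 V} (he : e ∈ lowPersEdges G f hf lt δ) {S : Set ℝ}
    (hS : S ⊆ Ici (f (pairVert G f hf lt e))) :
    negBelow G f hf lt e S ≤ fromEdgeSet {e' | e' ∈ lowPersEdges G f hf lt δ ∧ lt e' e} := by
  refine fromEdgeSet_mono fun e' ⟨hneg', hlt', hS'⟩ => ⟨⟨hneg', ?_⟩, hlt'⟩
  have hfbar := fbar_le_of_lt hlt hlt_refine he.1.1 hneg'.1 hlt'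
  have hpair : f (pairVert G f hf lt e) ≤ f (pairVert G f hf lt e') := hS hS'
  have hpers := he.2
  unfold persE at hpers ⊢
  linarith

namespace NegPathsToMin

variable {hf} {e : Sym2 V}

theorem reachable_compMin (h : NegPathsToMin G f hf lt e) (x : V) :
    (negBelow G f hf lt e (Ioi (f (compMin f (Gbelow G lt e) x)))).Reachable x
      (compMin f (Gbelow G lt e) x) := by
  obtain ⟨y, hxy, hy⟩ := h _ (isUpperSet_Ioi _) x
  by_cases hfy : f y ∈ Ioi (f (compMin f (Gbelow G lt e) x))
  · exact hy hfy ▸ hxy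
  · exact eq_compMin_of_reachable_of_le hf (hxy.mono (negBelow_le_Gbelow hf e _))
      (not_lt.mp hfy) ▸ hxy

theorem exists_lt (h : NegPathsToMin G f hf lt e) {x : V} {c : ℝ}
    (hc : f (compMin f (Gbelow G lt e) x) < c) :
    ∃ y, f y < c ∧ (negBelow G f hf lt e (Ici c)).Reachable x y := by
  obtain ⟨y, hxy, hy⟩ := h _ (isUpperSet_Ici c) x
  refine ⟨y, not_le.mp fun hcy => ?_, hxy⟩
  exact (hy hcy ▸ hc).not_ge hcy

end NegPathsToMin

theorem negPathsToMin_of_bridge {e e₁ : Sym2 V} {a b x : V} (he₁ : e₁ ∈ G.edgeSet)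
    (hab : e₁ = s(a, b)) (he₁e : lt e₁ e) (hlt : ∀ e' ∈ G.edgeSet, lt e' e₁ → lt e' e)
    (ih : NegPathsToMin G f hf lt e₁) (hxa : (Gbelow G lt e₁).Reachable x a)
    (hbm : (Gbelow G lt e₁).Reachable b (compMin f (Gbelow G lt e) x))
    (hxm : ¬ (Gbelow G lt e₁).Reachable x (compMin f (Gbelow G lt e) x))
    {S : Set ℝ} (hS : IsUpperSet S) :
    ∃ y, (negBelow G f hf lt e S).Reachable x y ∧
      (f y ∈ S → y = compMin f (Gbelow G lt e) x) := by
  set H₁ := Gbelow G lt e₁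
  set m := compMin f (Gbelow G lt e) x
  have hle : H₁ ≤ Gbelow G lt e := Gbelow_mono hlt
  have hnab : ¬ H₁.Reachable a b := fun h => hxm (hxa.trans (h.trans hbm))
  have hmb : compMin f H₁ b = m := eq_compMin_of_reachable_of_le hf
    (((compMin_reachable f _ x).trans (hbm.symm.mono hle)).trans
      ((compMin_reachable f H₁ b).mono hle)) (compMin_le f H₁ hbm)
  have hxa' : compMin f H₁ x = compMin f H₁ a := compMin_eq_of_reachable hf hxa
  have hm_lt : f m < f (compMin f H₁ a) := by
    refine lt_of_le_of_ne (compMin_le f _ ((hxa.trans (compMin_reachable f H₁ a)).mono hle))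
      (hf.ne ?_)
    rw [← hmb]
    exact fun h => hnab (reachable_of_compMin_eq h).symm
  have hpv : pairVert G f hf lt e₁ = compMin f H₁ a := pairVert_eq_of_lt hf hab (hmb ▸ hm_lt)
  have hmono : negBelow G f hf lt e₁ S ≤ negBelow G f hf lt e S := negBelow_mono hf hlt subset_rfl
  by_cases hSa : f (compMin f H₁ a) ∈ S
  · have hmono' : negBelow G f hf lt e₁ (Ioi (f (compMin f H₁ a))) ≤ negBelow G f hf lt e S :=
      negBelow_mono hf hlt (hS.Ioi_subset hSa)
    have hx : (negBelow G f hf lt e S).Reachable x (compMin f H₁ a) := by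
      have := ih.reachable_compMin x
      rw [hxa'] at this
      exact this.mono hmono'
    have ha : (negBelow G f hf lt e S).Reachable a (compMin f H₁ a) :=
      (ih.reachable_compMin a).mono hmono'
    have hadj : (negBelow G f hf lt e S).Adj a b := by
      refine (fromEdgeSet_adj _).mpr ⟨?_, fun h => hnab (h ▸ .rfl)⟩
      rw [← hab]
      exact ⟨⟨he₁, a, b, hab, hnab⟩, he₁e, hpv ▸ hSa⟩
    obtain ⟨y, hby, hy⟩ := ih S hS b
    exact ⟨y, hx.trans (ha.symm.trans (hadj.reachable.trans (hby.mono hmono))),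
      fun h => (hy h).trans hmb⟩
  · obtain ⟨y, hxy, hy⟩ := ih S hS x
    refine ⟨y, hxy.mono hmono, fun h => ?_⟩
    rw [hy h, hxa'] at h
    exact absurd h hSa

theorem negPathsToMin (hlt : IsStrictTotalOrderOn lt G.edgeSet) {e : Sym2 V}
    (he : e ∈ G.edgeSet) : NegPathsToMin G f hf lt e := by
  refine hlt.induction (fun e he ih S hS x => ?_) e he
  rcases eq_empty_or_nonempty {e' | e' ∈ G.edgeSet ∧ lt e' e} with hB | hB
  · have hbot : Gbelow G lt e = ⊥ := by
      rw [Gbelow, hB, fromEdgeSet_empty]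
    have hx := compMin_reachable f (Gbelow G lt e) x
    rw [hbot, reachable_bot] at hx
    exact ⟨x, .rfl, fun _ => hbot ▸ hx⟩
  obtain ⟨e₁, ⟨he₁, he₁e⟩, hmax⟩ := hlt.exists_max (fun _ h => h.1) hB
  have hlt₁ : ∀ e' ∈ G.edgeSet, lt e' e₁ → lt e' e :=
    fun e' he' h => hlt.trans e' he' e₁ he₁ e he h he₁e
  by_cases hxm : (Gbelow G lt e₁).Reachable x (compMin f (Gbelow G lt e) x)
  · obtain ⟨y, hxy, hy⟩ := ih e₁ he₁ he₁e S hS x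
    refine ⟨y, hxy.mono (negBelow_mono hf hlt₁ subset_rfl), ?_⟩
    rwa [← compMin_eq_of_le hf (Gbelow_mono hlt₁) hxm]
  obtain ⟨a, b, hab⟩ : ∃ a b, e₁ = s(a, b) := Sym2.ind (fun a b => ⟨a, b, rfl⟩) e₁
  have hsub : {e' | e' ∈ G.edgeSet ∧ lt e' e} ⊆
      insert s(a, b) {e' | e' ∈ G.edgeSet ∧ lt e' e₁} := by
    intro e' he'
    rw [← hab]
    exact (eq_or_ne e' e₁).imp id fun hne => ⟨he'.1, hmax e' he' hne⟩
  rcases reachable_fromEdgeSet_insert ((compMin_reachable f _ x).mono (fromEdgeSet_mono hsub))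
    with h | ⟨hxa, hbm⟩ | ⟨hxb, ham⟩
  · exact absurd h hxm
  · exact negPathsToMin_of_bridge hf he₁ hab he₁e hlt₁ (ih e₁ he₁ he₁e) hxa hbm hxm hS
  · exact negPathsToMin_of_bridge hf he₁ (hab.trans Sym2.eq_swap) he₁e hlt₁ (ih e₁ he₁ he₁e)
      hxb ham hxm hS

theorem lt_persE_of_pairVert_eq_compMin (hlt : IsStrictTotalOrderOn lt G.edgeSet)
    (hlt_refine : ∀ e₁ ∈ G.edgeSet, ∀ e₂ ∈ G.edgeSet, fbar f e₁ < fbar f e₂ → lt e₁ e₂)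
    {δ : ℝ} (v : V) {e : Sym2 V} (he : IsNegEdge G lt e)
    (hpv : pairVert G f hf lt e = compMin f (fromEdgeSet (lowPersEdges G f hf lt δ)) v) :
    δ < persE G f hf lt e := by
  set T := fromEdgeSet (lowPersEdges G f hf lt δ)
  by_contra! hpers
  have heT : e ∈ lowPersEdges G f hf lt δ := ⟨he, hpers⟩
  have hle : ∀ S ⊆ Ici (f (pairVert G f hf lt e)), negBelow G f hf lt e S ≤ T := fun S hS =>
    (negBelow_le_lowPers hf hlt hlt_refine heT hS).trans (fromEdgeSet_mono fun _ h => h.1)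
  have hpaths := negPathsToMin hf hlt he.1
  obtain ⟨a, b, rfl, hab, hpvb⟩ := he.exists_pairVert_eq hf
  rw [hpvb] at hpv hle
  have hbu : T.Reachable b (compMin f T v) :=
    hpv ▸ (hpaths.reachable_compMin b).mono (hle _ Ioi_subset_Ici_self)
  obtain ⟨y, hy, hay⟩ := hpaths.exists_lt hab
  have hadj : T.Adj a b := (fromEdgeSet_adj _).mpr ⟨heT, by rintro rfl; exact hab.false⟩
  have hvy : T.Reachable v y := (compMin_reachable f T v).trans
    (hbu.symm.trans (hadj.symm.reachable.trans (hay.mono (hle _ subset_rfl))))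
  exact (compMin_le f T hvy).not_gt (hpv ▸ hy)

theorem eq_compMin_of_forall_lt_persE (hlt : IsStrictTotalOrderOn lt G.edgeSet)
    (hlt_refine : ∀ e₁ ∈ G.edgeSet, ∀ e₂ ∈ G.edgeSet, fbar f e₁ < fbar f e₂ → lt e₁ e₂)
    {δ : ℝ} {v w : V} (hvw : (fromEdgeSet (lowPersEdges G f hf lt δ)).Reachable v w)
    (hw : ∀ e, IsNegEdge G lt e → pairVert G f hf lt e = w → δ < persE G f hf lt e) :
    w = compMin f (fromEdgeSet (lowPersEdges G f hf lt δ)) v := by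
  set T := fromEdgeSet (lowPersEdges G f hf lt δ)
  by_contra hne
  have hwv : f (compMin f T v) < f w := lt_of_le_of_ne (compMin_le f T hvw) (hf.ne (Ne.symm hne))
  have hTlt : IsStrictTotalOrderOn lt (lowPersEdges G f hf lt δ) :=
    ⟨fun e he => hlt.irrefl e he.1.1, fun a ha b hb c hc => hlt.trans a ha.1.1 b hb.1.1 c hc.1.1,
      fun a ha b hb => hlt.total a ha.1.1 b hb.1.1⟩
  obtain ⟨e, heT, a, b, z, rfl, hz, hwa, hbz, hfirst⟩ := exists_first_edge hTlt
    (p := fun z => f z < f w) (lt_irrefl _) hwv (hvw.symm.trans (compMin_reachable f T v))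
  set H := Gbelow G lt s(a, b)
  have hle : fromEdgeSet {e' | e' ∈ lowPersEdges G f hf lt δ ∧ lt e' s(a, b)} ≤ H :=
    fromEdgeSet_mono fun e' h => ⟨h.1.1.1, h.2⟩
  have hb : f (compMin f H b) < f w := (compMin_le f H (hbz.mono hle)).trans_lt hz
  have ha : compMin f H a = w := by
    refine hf (le_antisymm (compMin_le f H (hwa.mono hle).symm) (not_lt.mp fun ha => ?_))
    have hpv : f (pairVert G f hf lt s(a, b)) ≤ f w := by
      rcases pairVert_mk_mem hf a b with h | h <;> rw [h]
      exacts [ha.le, hb.le]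
    obtain ⟨y, hy, hwy⟩ := (negPathsToMin hf hlt heT.1.1).exists_lt
      (x := w) (c := f w) (by rwa [compMin_eq_of_reachable hf (hwa.mono hle)])
    exact hfirst y (hwy.mono (negBelow_le_lowPers hf hlt hlt_refine heT (Ici_subset_Ici.mpr hpv))) hy
  exact (hw _ heT.1 ((pairVert_eq_of_lt hf rfl (ha ▸ hb)).trans ha)).not_ge heT.2

end Elder

theorem sink_unique_in_component_general {V : Type*} [Fintype V]
    (G : SimpleGraph V) (f : V → ℝ) (hf : Function.Injective f)
    (lt : Sym2 V → Sym2 V → Prop)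
    (hlt_irrefl : ∀ e ∈ G.edgeSet, ¬ lt e e)
    (hlt_trans : ∀ e₁ ∈ G.edgeSet, ∀ e₂ ∈ G.edgeSet, ∀ e₃ ∈ G.edgeSet,
      lt e₁ e₂ → lt e₂ e₃ → lt e₁ e₃)
    (hlt_total : ∀ e₁ ∈ G.edgeSet, ∀ e₂ ∈ G.edgeSet, e₁ ≠ e₂ → lt e₁ e₂ ∨ lt e₂ e₁)
    (hlt_refine : ∀ e₁ ∈ G.edgeSet, ∀ e₂ ∈ G.edgeSet, fbar f e₁ < fbar f e₂ → lt e₁ e₂)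
    (δ : ℝ) :
    ∀ v : V, ∃ u : V,
      (SimpleGraph.fromEdgeSet
          {e | IsNegEdge G lt e ∧ persE G f hf lt e ≤ δ}).Reachable v u ∧
      (∀ e : Sym2 V, IsNegEdge G lt e → pairVert G f hf lt e = u → δ < persE G f hf lt e) ∧
      (∀ w : V,
        (SimpleGraph.fromEdgeSet
            {e | IsNegEdge G lt e ∧ persE G f hf lt e ≤ δ}).Reachable v w → f u ≤ f w) ∧
      (∀ u' : V,
        (SimpleGraph.fromEdgeSet
            {e | IsNegEdge G lt e ∧ persE G f hf lt e ≤ δ}).Reachable v u' →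
        (∀ e : Sym2 V, IsNegEdge G lt e → pairVert G f hf lt e = u' →
          δ < persE G f hf lt e) → u' = u) := by
  have hlt : IsStrictTotalOrderOn lt G.edgeSet := ⟨hlt_irrefl, hlt_trans, hlt_total⟩
  intro v
  exact ⟨_, compMin_reachable f _ v,
    fun e he hpv => lt_persE_of_pairVert_eq_compMin hf hlt hlt_refine v he hpv,
    fun w hw => compMin_le f _ hw,
    fun w hw hpaired => eq_compMin_of_forall_lt_persE hf hlt hlt_refine hw hpaired⟩

/-- For every `δ ≥ 0`, every connected component of the spanning subgraph
`T_δ` (edges: the negative edges with persistence at most `δ`) contains exactly one vertex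
that is unpaired or paired with persistence strictly greater than `δ`, namely the vertex of
the component minimizing `f` (the sink). -/
theorem sink_unique_in_component {V : Type*} [Fintype V]
    (G : SimpleGraph V) (f : V → ℝ) (hf : Function.Injective f)
    (lt : Sym2 V → Sym2 V → Prop)
    (hlt_irrefl : ∀ e ∈ G.edgeSet, ¬ lt e e)
    (hlt_trans : ∀ e₁ ∈ G.edgeSet, ∀ e₂ ∈ G.edgeSet, ∀ e₃ ∈ G.edgeSet,
      lt e₁ e₂ → lt e₂ e₃ → lt e₁ e₃)
    (hlt_total : ∀ e₁ ∈ G.edgeSet, ∀ e₂ ∈ G.edgeSet, e₁ ≠ e₂ → lt e₁ e₂ ∨ lt e₂ e₁)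
    (hlt_refine : ∀ e₁ ∈ G.edgeSet, ∀ e₂ ∈ G.edgeSet, fbar f e₁ < fbar f e₂ → lt e₁ e₂)
    (δ : ℝ) (hδ : 0 ≤ δ) :
    ∀ v : V, ∃ u : V,
      (SimpleGraph.fromEdgeSet
          {e | IsNegEdge G lt e ∧ persE G f hf lt e ≤ δ}).Reachable v u ∧
      (∀ e : Sym2 V, IsNegEdge G lt e → pairVert G f hf lt e = u → δ < persE G f hf lt e) ∧
      (∀ w : V,
        (SimpleGraph.fromEdgeSet
            {e | IsNegEdge G lt e ∧ persE G f hf lt e ≤ δ}).Reachable v w → f u ≤ f w) ∧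
      (∀ u' : V,
        (SimpleGraph.fromEdgeSet
            {e | IsNegEdge G lt e ∧ persE G f hf lt e ≤ δ}).Reachable v u' →
        (∀ e : Sym2 V, IsNegEdge G lt e → pairVert G f hf lt e = u' →
          δ < persE G f hf lt e) → u' = u) :=
  sink_unique_in_component_general G f hf lt hlt_irrefl hlt_trans hlt_total hlt_refine δ
end

section
/- Under the noise model, no vertex–edge persistence pair crosses S: there is no negative edge e having an endpoint outside S whose paired vertex m(e) lies in S, and there is no negative edge e with both endpoints in S whose paired vertex m(e) lies outside S. -/
open SimpleGraph

/- The noise model only enters through the fact that every value on `S` lies below every value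
off `S`. An edge `e` with an endpoint outside `S` therefore comes after every edge of `G[S]`, so
`S` lies in a single component of `G_{≺e}`; if `e` is negative, at most one of the two component
minima lies in `S`, and being the elder it is not the one paired with `e`. An edge inside `S` has
both component minima in `S`, since each lies below an endpoint of `e`. -/

lemma compMin_spec {V : Type*} [Fintype V] (f : V → ℝ) (H : SimpleGraph V) (u : V) :
    H.Reachable u (compMin f H u) ∧ ∀ v, H.Reachable u v → f (compMin f H u) ≤ f v := by
  classical
  obtain ⟨hmem, hmin⟩ := Classical.choose_spec (Finset.exists_min_image
    (Finset.univ.filter fun v => H.Reachable u v) f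
    ⟨u, Finset.mem_filter.mpr ⟨Finset.mem_univ u, SimpleGraph.Reachable.refl u⟩⟩)
  exact ⟨(Finset.mem_filter.mp hmem).2,
    fun v hv => hmin v (Finset.mem_filter.mpr ⟨Finset.mem_univ v, hv⟩)⟩

lemma compMin_le_self {V : Type*} [Fintype V] (f : V → ℝ) (H : SimpleGraph V) (u : V) :
    f (compMin f H u) ≤ f u :=
  (compMin_spec f H u).2 u (Reachable.refl u)

section PairVert

variable {V : Type*} [Fintype V] {G : SimpleGraph V} {f : V → ℝ} (hf : Function.Injective f)
  {lt : Sym2 V → Sym2 V → Prop} {u w : V}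

lemma pairVert_eq_right_of_lt
    (h : f (compMin f (Gbelow G lt s(u, w)) u) < f (compMin f (Gbelow G lt s(u, w)) w)) :
    pairVert G f hf lt s(u, w) = compMin f (Gbelow G lt s(u, w)) w :=
  if_pos h

lemma pairVert_eq_left_of_not_lt
    (h : ¬ f (compMin f (Gbelow G lt s(u, w)) u) < f (compMin f (Gbelow G lt s(u, w)) w)) :
    pairVert G f hf lt s(u, w) = compMin f (Gbelow G lt s(u, w)) u :=
  if_neg h

lemma pairVert_eq_left_or_right :
    pairVert G f hf lt s(u, w) = compMin f (Gbelow G lt s(u, w)) u ∨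
      pairVert G f hf lt s(u, w) = compMin f (Gbelow G lt s(u, w)) w := by
  by_cases h : f (compMin f (Gbelow G lt s(u, w)) u) < f (compMin f (Gbelow G lt s(u, w)) w)
  exacts [Or.inr (pairVert_eq_right_of_lt hf h), Or.inl (pairVert_eq_left_of_not_lt hf h)]

end PairVert

lemma gbelow_adj {V : Type*} {G : SimpleGraph V} {lt : Sym2 V → Sym2 V → Prop} {e : Sym2 V}
    {a b : V} : (Gbelow G lt e).Adj a b ↔ G.Adj a b ∧ lt s(a, b) e := by
  simp only [Gbelow, fromEdgeSet_adj, Set.mem_ofPred_eq, mem_edgeSet]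
  exact ⟨fun h => h.1, fun h => ⟨h, h.1.ne⟩⟩

lemma IsNegEdge.not_reachable {V : Type*} {G : SimpleGraph V} {lt : Sym2 V → Sym2 V → Prop}
    {u w : V} (h : IsNegEdge G lt s(u, w)) : ¬ (Gbelow G lt s(u, w)).Reachable u w := by
  obtain ⟨-, u', w', heq, hnr⟩ := h
  rcases Sym2.eq_iff.mp heq with ⟨rfl, rfl⟩ | ⟨rfl, rfl⟩
  exacts [hnr, fun h => hnr h.symm]

lemma gbelow_reachable_of_induce {V : Type*} {G : SimpleGraph V} {lt : Sym2 V → Sym2 V → Prop}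
    {e : Sym2 V} {S : Set V} (hS : (G.induce S).Preconnected)
    (hlt : ∀ a ∈ S, ∀ b ∈ S, G.Adj a b → lt s(a, b) e) {a b : V} (ha : a ∈ S) (hb : b ∈ S) :
    (Gbelow G lt e).Reachable a b :=
  let φ : G.induce S →g Gbelow G lt e :=
    ⟨Subtype.val, fun {x y} hxy => gbelow_adj.mpr ⟨hxy, hlt x x.2 y y.2 hxy⟩⟩
  (hS ⟨a, ha⟩ ⟨b, hb⟩).map φ

section Separated

variable {V : Type*} [Fintype V] {G : SimpleGraph V} {f : V → ℝ} (hf : Function.Injective f)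
  {lt : Sym2 V → Sym2 V → Prop} {S : Set V}

lemma compMin_mem_of_mem (hsep : ∀ a ∈ S, ∀ x ∉ S, f a < f x) (H : SimpleGraph V) {u : V}
    (hu : u ∈ S) : compMin f H u ∈ S := by
  by_contra h
  exact (compMin_le_self f H u).not_gt (hsep u hu _ h)

lemma pairVert_mem_of_mem (hsep : ∀ a ∈ S, ∀ x ∉ S, f a < f x) {u w : V} (hu : u ∈ S)
    (hw : w ∈ S) : pairVert G f hf lt s(u, w) ∈ S := by
  rcases pairVert_eq_left_or_right hf (G := G) (lt := lt) (u := u) (w := w) with h | h <;>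
    rw [h] <;> exact compMin_mem_of_mem hsep _ ‹_›

lemma pairVert_not_mem_of_isNegEdge (hsep : ∀ a ∈ S, ∀ x ∉ S, f a < f x)
    (hlt_refine : ∀ e₁ ∈ G.edgeSet, ∀ e₂ ∈ G.edgeSet, fbar f e₁ < fbar f e₂ → lt e₁ e₂)
    (hS : (G.induce S).Preconnected) {u w : V} (hneg : IsNegEdge G lt s(u, w))
    (hout : u ∉ S ∨ w ∉ S) : pairVert G f hf lt s(u, w) ∉ S := by
  set H := Gbelow G lt s(u, w)
  have hSH : ∀ a ∈ S, ∀ b ∈ S, H.Reachable a b := by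
    refine fun a ha b hb => gbelow_reachable_of_induce hS (fun a ha b hb hab => ?_) ha hb
    refine hlt_refine _ hab _ hneg.1 ?_
    change max (f a) (f b) < max (f u) (f w)
    rcases hout with h | h
    · exact (max_lt (hsep a ha u h) (hsep b hb u h)).trans_le (le_max_left _ _)
    · exact (max_lt (hsep a ha w h) (hsep b hb w h)).trans_le (le_max_right _ _)
  have hcu := (compMin_spec f H u).1
  have hcw := (compMin_spec f H w).1
  by_cases hu : compMin f H u ∈ S <;> by_cases hw : compMin f H w ∈ S
  · exact absurd (hcu.trans ((hSH _ hu _ hw).trans hcw.symm)) hneg.not_reachable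
  · rw [pairVert_eq_right_of_lt hf (hsep _ hu _ hw)]
    exact hw
  · rw [pairVert_eq_left_of_not_lt hf (hsep _ hw _ hu).not_gt]
    exact hu
  · rcases pairVert_eq_left_or_right hf (G := G) (lt := lt) (u := u) (w := w) with h | h <;>
      rw [h] <;> assumption

end Separated

theorem no_crossing_pairs_general {V : Type*} [Fintype V]
    (G : SimpleGraph V) (f : V → ℝ) (hf : Function.Injective f)
    (lt : Sym2 V → Sym2 V → Prop)
    (hlt_refine : ∀ e₁ ∈ G.edgeSet, ∀ e₂ ∈ G.edgeSet, fbar f e₁ < fbar f e₂ → lt e₁ e₂)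
    (S : Set V) (β ν : ℝ) (hβν : 2 * ν < β) (hν : 0 ≤ ν)
    (hS : (G.induce S).Connected)
    (hfS : ∀ v ∈ S, f v ∈ Set.Icc (-β - ν) (-β))
    (hfSc : ∀ v : V, v ∉ S → f v ∈ Set.Icc (-ν) 0) :
    (∀ (e : Sym2 V) (u w : V), IsNegEdge G lt e → e = s(u, w) → (u ∉ S ∨ w ∉ S) →
      pairVert G f hf lt e ∉ S) ∧
    (∀ (e : Sym2 V) (u w : V), IsNegEdge G lt e → e = s(u, w) → u ∈ S → w ∈ S →
      pairVert G f hf lt e ∈ S) := by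
  have hsep : ∀ a ∈ S, ∀ x ∉ S, f a < f x := fun a ha x hx => by
    linarith [(hfS a ha).2, (hfSc x hx).1]
  refine ⟨?_, ?_⟩
  · rintro e u w hneg rfl hout
    exact pairVert_not_mem_of_isNegEdge hf hsep hlt_refine hS.preconnected hneg hout
  · rintro e u w - rfl hu hw
    exact pairVert_mem_of_mem hf hsep hu hw

/-- Under the noise model, no vertex–edge persistence pair crosses `S`:
no negative edge with an endpoint outside `S` has its paired vertex in `S`, and no negative
edge with both endpoints in `S` has its paired vertex outside `S`. -/
theorem no_crossing_pairs {V : Type*} [Fintype V]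
    (G : SimpleGraph V) (f : V → ℝ) (hf : Function.Injective f)
    (lt : Sym2 V → Sym2 V → Prop)
    (hlt_irrefl : ∀ e ∈ G.edgeSet, ¬ lt e e)
    (hlt_trans : ∀ e₁ ∈ G.edgeSet, ∀ e₂ ∈ G.edgeSet, ∀ e₃ ∈ G.edgeSet,
      lt e₁ e₂ → lt e₂ e₃ → lt e₁ e₃)
    (hlt_total : ∀ e₁ ∈ G.edgeSet, ∀ e₂ ∈ G.edgeSet, e₁ ≠ e₂ → lt e₁ e₂ ∨ lt e₂ e₁)
    (hlt_refine : ∀ e₁ ∈ G.edgeSet, ∀ e₂ ∈ G.edgeSet, fbar f e₁ < fbar f e₂ → lt e₁ e₂)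
    (S : Set V) (β ν : ℝ) (hβν : 2 * ν < β) (hν : 0 ≤ ν)
    (hG : G.Connected) (hS : (G.induce S).Connected)
    (hfS : ∀ v ∈ S, f v ∈ Set.Icc (-β - ν) (-β))
    (hfSc : ∀ v : V, v ∉ S → f v ∈ Set.Icc (-ν) 0) :
    (∀ (e : Sym2 V) (u w : V), IsNegEdge G lt e → e = s(u, w) → (u ∉ S ∨ w ∉ S) →
      pairVert G f hf lt e ∉ S) ∧
    (∀ (e : Sym2 V) (u w : V), IsNegEdge G lt e → e = s(u, w) → u ∈ S → w ∈ S →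
      pairVert G f hf lt e ∈ S) :=
  no_crossing_pairs_general G f hf lt hlt_refine S β ν hβν hν hS hfS hfSc
end

section
/- Under the noise model, assume the induced subgraph G[S] contains at least one cycle. Let T be the spanning tree of G formed by all negative edges, let v₀ be the global f-minimum, and define Ĝ to be the subgraph of G consisting of, for each positive edge e = {u,w} of G with u, w ∈ S, the edge e together with all edges and vertices of the unique paths in T from u to v₀ and from w to v₀. Then Ĝ is a connected subgraph of the induced subgraph G[S], and its first Betti number |E(Ĝ)| − |V(Ĝ)| + 1 equals |E(G[S])| − |S| + 1, the first Betti number of G[S]. -/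
/-!
Edges inside `S` have `f̄ ≤ -β < -ν ≤ f̄` of every edge leaving `S`, so the edges of `G[S]` form
an initial segment of `≺`. The endpoints of a positive edge are joined by strictly smaller edges,
so by induction along `≺` the negative edges inside `S` already connect `S`; since the negative
edges form a forest (the `≺`-largest edge of a cycle would be positive), they form a spanning tree
of `G[S]`. The global minimum `v₀` lies in `S`, so the tree paths to `v₀` from the endpoints of
the positive edges of `G[S]` stay in that tree and their union is a subtree spanning the vertices
of `Ĝ`. Counting edges: `|E(G[S])| = (|S| - 1) + #positive` and `|E(Ĝ)| = (|V(Ĝ)| - 1) + #positive`.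
-/

open SimpleGraph

namespace SimpleGraph

variable {V : Type*}

lemma edgeSet_fromEdgeSet_of_subset {G : SimpleGraph V} {s : Set (Sym2 V)}
    (h : s ⊆ G.edgeSet) : (fromEdgeSet s).edgeSet = s := by
  rw [edgeSet_fromEdgeSet, sdiff_eq_left, Set.disjoint_left]
  exact fun e he => G.not_isDiag_of_mem_edgeSet (h he)

lemma Reachable.lift {W : Type*} {G : SimpleGraph V} {H : SimpleGraph W} (f : V → W)
    (h : ∀ a b, G.Adj a b → H.Reachable (f a) (f b)) {u v : V} (huv : G.Reachable u v) :
    H.Reachable (f u) (f v) := by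
  rw [reachable_iff_reflTransGen] at huv ⊢
  exact Relation.ReflTransGen.lift' f (fun a b hab => (reachable_iff_reflTransGen _ _).mp
    (h a b hab)) _ _ huv

lemma IsAcyclic.edges_subset_of_reachable_of_le {T H : SimpleGraph V} (hT : T.IsAcyclic)
    (hHT : H ≤ T) {u v : V} (huv : H.Reachable u v) {p : T.Walk u v} (hp : p.IsPath) :
    ∀ e ∈ p.edges, e ∈ H.edgeSet := by
  obtain ⟨q, hq⟩ := huv.exists_isPath
  obtain rfl : p = q.mapLe hHT :=
    congrArg Subtype.val
      ((hT.subsingleton_path u v).elim ⟨p, hp⟩ ⟨q.mapLe hHT, hq.mapLe hHT⟩)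
  rw [Walk.edges_mapLe_eq_edges]
  exact fun e he => q.edges_subset_edgeSet he

lemma connected_induce_of_reachable {K : SimpleGraph V} {A : Set V} (hsupp : K.support ⊆ A)
    {r : V} (hr : r ∈ A) (hreach : ∀ u ∈ A, K.Reachable u r) : (K.induce A).Connected := by
  have hwalk : ∀ {u v : V} (p : K.Walk u v), u ∈ A → ∀ x ∈ p.support, x ∈ A := by
    intro u v p hu x hx
    by_cases hp : p.Nil
    · rw [Walk.nil_iff_support_eq.mp hp, List.mem_singleton] at hx
      exact hx ▸ hu
    · exact hsupp (mem_support_of_mem_walk_support p hp hx)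
  refine (connected_iff _).mpr ⟨fun ⟨u, hu⟩ ⟨v, hv⟩ => ?_, ⟨⟨r, hr⟩⟩⟩
  obtain ⟨p⟩ := (hreach u hu).trans (hreach v hv).symm
  exact ⟨p.induce A (hwalk p hu)⟩

lemma IsAcyclic.ncard_edgeSet_add_one [Finite V] {K : SimpleGraph V} (hK : K.IsAcyclic)
    {A : Set V} (hsupp : K.support ⊆ A) {r : V} (hr : r ∈ A)
    (hreach : ∀ u ∈ A, K.Reachable u r) : K.edgeSet.ncard + 1 = A.ncard := by
  classical
  have := Fintype.ofFinite V
  have hcard := (isTree_iff_connected_and_card.mp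
    ⟨connected_induce_of_reachable hsupp hr hreach, hK.induce A⟩).2
  have hedges : (K.induce A).edgeSet.ncard = K.edgeSet.ncard := by
    simpa only [Set.ncard_eq_toFinset_card', edgeFinset] using
      card_edgeFinset_induce_of_support_subset hsupp
  rwa [Nat.card_coe_set_eq, hedges] at hcard

end SimpleGraph

section EdgeOrder

variable {V : Type*} {G : SimpleGraph V} {lt : Sym2 V → Sym2 V → Prop}

lemma wellFounded_edgeSet [Finite V] (hirr : ∀ e ∈ G.edgeSet, ¬ lt e e)
    (htrans : ∀ e₁ ∈ G.edgeSet, ∀ e₂ ∈ G.edgeSet, ∀ e₃ ∈ G.edgeSet,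
      lt e₁ e₂ → lt e₂ e₃ → lt e₁ e₃) :
    WellFounded (fun a b : G.edgeSet => lt a b) :=
  have : IsTrans G.edgeSet (fun a b => lt a b) := ⟨fun a b c => htrans a a.2 b b.2 c c.2⟩
  have : Std.Irrefl (fun a b : G.edgeSet => lt a b) := ⟨fun a => hirr a a.2⟩
  Finite.wellFounded_of_trans_of_irrefl _

theorem isAcyclic_fromEdgeSet_isNegEdge [Finite V] (hirr : ∀ e ∈ G.edgeSet, ¬ lt e e)
    (htrans : ∀ e₁ ∈ G.edgeSet, ∀ e₂ ∈ G.edgeSet, ∀ e₃ ∈ G.edgeSet,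
      lt e₁ e₂ → lt e₂ e₃ → lt e₁ e₃)
    (htotal : ∀ e₁ ∈ G.edgeSet, ∀ e₂ ∈ G.edgeSet, e₁ ≠ e₂ → lt e₁ e₂ ∨ lt e₂ e₁) :
    (fromEdgeSet {e | IsNegEdge G lt e}).IsAcyclic := by
  intro v c hc
  have hneg : ∀ e ∈ c.edges, IsNegEdge G lt e := fun e he =>
    ((edgeSet_fromEdgeSet _).subset (c.edges_subset_edgeSet he)).1
  have hswap := wellFounded_edgeSet (G := G) (lt := fun a b => lt b a) hirr
    (fun e₁ h₁ e₂ h₂ e₃ h₃ h₁₂ h₂₃ => htrans e₃ h₃ e₂ h₂ e₁ h₁ h₂₃ h₁₂)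
  obtain ⟨⟨e, heG⟩, he, hmax⟩ := hswap.has_min {x | x.1 ∈ c.edges}
    ⟨⟨_, (hneg _ (c.mk_start_snd_mem_edges hc.not_nil)).1⟩, c.mk_start_snd_mem_edges hc.not_nil⟩
  obtain ⟨-, u, w, rfl, hunreach⟩ := hneg _ he
  -- the cycle lives in `G_{≺e} ⊔ e`, so deleting its top edge `e` keeps `u` and `w` connected
  have hcH : ∀ e' ∈ c.edges, e' ∈ (Gbelow G lt s(u, w) ⊔ edge u w).edgeSet := by
    intro e' he'
    have he'G := (hneg e' he').1
    rw [edgeSet_sup, Gbelow, edgeSet_fromEdgeSet, edge, edgeSet_fromEdgeSet]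
    by_cases h : e' = s(u, w)
    · exact Or.inr ⟨h, G.not_isDiag_of_mem_edgeSet he'G⟩
    · refine Or.inl ⟨⟨he'G, ?_⟩, G.not_isDiag_of_mem_edgeSet he'G⟩
      exact (htotal _ he'G _ heG h).resolve_right (hmax ⟨e', he'G⟩ he')
  obtain ⟨-, hreach⟩ := adj_and_reachable_delete_edges_iff_exists_cycle.mpr
    ⟨v, c.transfer _ hcH, hc.transfer hcH, by rwa [Walk.edges_transfer]⟩
  exact hunreach (hreach.mono (sdiff_le_iff.mpr (by rw [sup_comm, edge])))

theorem reachable_of_mem_of_lowerClosed [Finite V] (hirr : ∀ e ∈ G.edgeSet, ¬ lt e e)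
    (htrans : ∀ e₁ ∈ G.edgeSet, ∀ e₂ ∈ G.edgeSet, ∀ e₃ ∈ G.edgeSet,
      lt e₁ e₂ → lt e₂ e₃ → lt e₁ e₃)
    {E : Set (Sym2 V)} (hE : E ⊆ G.edgeSet) (hlower : ∀ e ∈ E, ∀ e' ∈ G.edgeSet, lt e' e → e' ∈ E)
    {H : SimpleGraph V} (hH : ∀ e ∈ E, IsNegEdge G lt e → e ∈ H.edgeSet)
    {u w : V} (huw : s(u, w) ∈ E) : H.Reachable u w := by
  suffices ∀ e : G.edgeSet, e.1 ∈ E → ∀ u w, e.1 = s(u, w) → H.Reachable u w from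
    this ⟨_, hE huw⟩ huw u w rfl
  intro e
  induction e using (wellFounded_edgeSet hirr htrans).induction with
  | _ e ih =>
  intro he u w hew
  rw [hew] at he ih
  by_cases hneg : IsNegEdge G lt s(u, w)
  · exact Adj.reachable (hH _ he hneg)
  · have hbelow : (Gbelow G lt s(u, w)).Reachable u w := by
      by_contra h
      exact hneg ⟨hE he, u, w, rfl, h⟩
    refine hbelow.lift id fun a b hab => ?_
    rw [Gbelow, fromEdgeSet_adj] at hab
    obtain ⟨⟨habG, hablt⟩, -⟩ := hab
    exact ih ⟨_, habG⟩ hablt (hlower _ he _ habG hablt) a b rfl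

end EdgeOrder

section NoiseModel

variable {V : Type*} {f : V → ℝ} {S : Set V} {a b : ℝ}

lemma le_fbar_of_mem {v : V} {e : Sym2 V} (hv : v ∈ e) : f v ≤ fbar f e := by
  induction e using Sym2.ind with
  | _ x y =>
    rcases Sym2.mem_iff.mp hv with rfl | rfl
    · exact le_max_left _ _
    · exact le_max_right _ _

lemma fbar_le_of_forall_mem {c : ℝ} {e : Sym2 V} (h : ∀ v ∈ e, f v ≤ c) : fbar f e ≤ c := by
  induction e using Sym2.ind with
  | _ x y => exact max_le (h x (Sym2.mem_mk_left x y)) (h y (Sym2.mem_mk_right x y))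

lemma fbar_lt_fbar_of_separated (hab : a < b) (hS : ∀ v ∈ S, f v ≤ a) (hSc : ∀ v ∉ S, b ≤ f v)
    {e e' : Sym2 V} (he : ∀ v ∈ e, v ∈ S) (he' : ¬ ∀ v ∈ e', v ∈ S) : fbar f e < fbar f e' := by
  obtain ⟨v, hv, hvS⟩ := not_forall₂.mp he'
  calc fbar f e ≤ a := fbar_le_of_forall_mem fun w hw => hS w (he w hw)
    _ < b := hab
    _ ≤ f v := hSc v hvS
    _ ≤ fbar f e' := le_fbar_of_mem hv

lemma mem_of_forall_le_of_separated (hab : a < b) (hS : ∀ v ∈ S, f v ≤ a)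
    (hSc : ∀ v ∉ S, b ≤ f v) (hne : S.Nonempty) {v₀ : V} (hv₀ : ∀ w, f v₀ ≤ f w) : v₀ ∈ S := by
  obtain ⟨w, hw⟩ := hne
  by_contra h
  linarith [hS w hw, hSc v₀ h, hv₀ w]

variable {G : SimpleGraph V} {lt : Sym2 V → Sym2 V → Prop}

theorem lowerClosed_of_separated (hirr : ∀ e ∈ G.edgeSet, ¬ lt e e)
    (htrans : ∀ e₁ ∈ G.edgeSet, ∀ e₂ ∈ G.edgeSet, ∀ e₃ ∈ G.edgeSet,
      lt e₁ e₂ → lt e₂ e₃ → lt e₁ e₃)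
    (hrefine : ∀ e₁ ∈ G.edgeSet, ∀ e₂ ∈ G.edgeSet, fbar f e₁ < fbar f e₂ → lt e₁ e₂)
    (hab : a < b) (hS : ∀ v ∈ S, f v ≤ a) (hSc : ∀ v ∉ S, b ≤ f v) :
    ∀ e ∈ {e | e ∈ G.edgeSet ∧ ∀ v ∈ e, v ∈ S}, ∀ e' ∈ G.edgeSet, lt e' e →
      e' ∈ {e | e ∈ G.edgeSet ∧ ∀ v ∈ e, v ∈ S} := by
  refine fun e he e' he'G hlt => ⟨he'G, by_contra fun he' => hirr e' he'G ?_⟩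
  exact htrans _ he'G _ he.1 _ he'G hlt
    (hrefine _ he.1 _ he'G (fbar_lt_fbar_of_separated hab hS hSc he.2 he'))

end NoiseModel

section NegativeEdgesIn

variable {V : Type*} {G : SimpleGraph V} {lt : Sym2 V → Sym2 V → Prop} {S : Set V}

def negEdgesIn (G : SimpleGraph V) (lt : Sym2 V → Sym2 V → Prop) (S : Set V) : Set (Sym2 V) :=
  {e | IsNegEdge G lt e ∧ ∀ v ∈ e, v ∈ S}

lemma edgeSet_fromEdgeSet_negEdgesIn :
    (fromEdgeSet (negEdgesIn G lt S)).edgeSet = negEdgesIn G lt S :=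
  edgeSet_fromEdgeSet_of_subset fun _ he => he.1.1

lemma fromEdgeSet_negEdgesIn_le :
    fromEdgeSet (negEdgesIn G lt S) ≤ fromEdgeSet {e | IsNegEdge G lt e} :=
  fromEdgeSet_mono fun _ he => he.1

theorem reachable_negEdgesIn_of_separated [Finite V] {f : V → ℝ} {a b : ℝ}
    (hirr : ∀ e ∈ G.edgeSet, ¬ lt e e)
    (htrans : ∀ e₁ ∈ G.edgeSet, ∀ e₂ ∈ G.edgeSet, ∀ e₃ ∈ G.edgeSet,
      lt e₁ e₂ → lt e₂ e₃ → lt e₁ e₃)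
    (hrefine : ∀ e₁ ∈ G.edgeSet, ∀ e₂ ∈ G.edgeSet, fbar f e₁ < fbar f e₂ → lt e₁ e₂)
    (hab : a < b) (hS : ∀ v ∈ S, f v ≤ a) (hSc : ∀ v ∉ S, b ≤ f v)
    (hconn : (G.induce S).Preconnected) {u w : V} (hu : u ∈ S) (hw : w ∈ S) :
    (fromEdgeSet (negEdgesIn G lt S)).Reachable u w :=
  (hconn ⟨u, hu⟩ ⟨w, hw⟩).lift Subtype.val fun x y hxy =>
    reachable_of_mem_of_lowerClosed hirr htrans (fun _ he => he.1)
      (lowerClosed_of_separated hirr htrans hrefine hab hS hSc)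
      (fun e he hneg => by rw [edgeSet_fromEdgeSet_negEdgesIn]; exact ⟨hneg, he.2⟩)
      ⟨hxy, by simp [x.2, y.2]⟩

theorem ncard_negEdgesIn_add_one [Finite V]
    (hT : (fromEdgeSet {e | IsNegEdge G lt e}).IsAcyclic) {r : V} (hr : r ∈ S)
    (hreach : ∀ u ∈ S, (fromEdgeSet (negEdgesIn G lt S)).Reachable u r) :
    (negEdgesIn G lt S).ncard + 1 = S.ncard := by
  rw [← edgeSet_fromEdgeSet_negEdgesIn]
  refine (hT.anti fromEdgeSet_negEdgesIn_le).ncard_edgeSet_add_one ?_ hr hreach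
  rintro v ⟨w, hvw⟩
  exact ((fromEdgeSet_adj _).mp hvw).1.2 v (Sym2.mem_mk_left v w)

lemma ncard_negEdgesIn_add_ncard_posEdgesIn [Finite V] :
    (negEdgesIn G lt S).ncard + {e | IsPosEdge G lt e ∧ ∀ v ∈ e, v ∈ S}.ncard =
      {e | e ∈ G.edgeSet ∧ ∀ v ∈ e, v ∈ S}.ncard := by
  rw [← Set.ncard_union_eq (Set.disjoint_left.mpr fun e hneg hpos => hpos.1.2 hneg.1)]
  congr 1
  ext e
  by_cases hneg : IsNegEdge G lt e
  · simp [negEdgesIn, IsPosEdge, hneg, hneg.1]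
  · simp [negEdgesIn, IsPosEdge, hneg]

lemma exists_isPosEdge_of_not_isAcyclic_induce
    (hT : (fromEdgeSet {e | IsNegEdge G lt e}).IsAcyclic) (hS : ¬ (G.induce S).IsAcyclic) :
    ∃ e, IsPosEdge G lt e ∧ ∀ v ∈ e, v ∈ S := by
  by_contra! h
  refine hS ((hT.induce S).anti fun x y (hxy : G.Adj x y) =>
    show (fromEdgeSet _).Adj (x : V) y from (fromEdgeSet_adj _).mpr ⟨?_, hxy.ne⟩)
  by_contra hneg
  obtain ⟨v, hv, hvS⟩ := h _ ⟨hxy, hneg⟩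
  rcases Sym2.mem_iff.mp hv with rfl | rfl
  exacts [hvS x.2, hvS y.2]

lemma IsPosEdge.notMem_edgeSet_fromEdgeSet {e : Sym2 V} (he : IsPosEdge G lt e) :
    e ∉ (fromEdgeSet {e | IsNegEdge G lt e}).edgeSet :=
  fun heT => he.2 ((edgeSet_fromEdgeSet _).subset heT).1

end NegativeEdgesIn

section Reconstruction

variable {V : Type*} {T : SimpleGraph V} {P : Set (Sym2 V)} {r : V}

def treePathEdges (T : SimpleGraph V) (P : Set (Sym2 V)) (r : V) : Set (Sym2 V) :=
  {e | ∃ u w, s(u, w) ∈ P ∧ ∃ p : T.Walk u r, p.IsPath ∧ e ∈ p.edges}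

lemma setOf_exists_eq_treePathEdges (p q : Sym2 V → Prop) :
    {e | ∃ (e' : Sym2 V) (u w : V), p e' ∧ q e' ∧ e' = s(u, w) ∧
      ∃ γ : T.Walk u r, γ.IsPath ∧ e ∈ γ.edges} = treePathEdges T {e | p e ∧ q e} r := by
  ext e
  constructor
  · rintro ⟨_, u, w, hp, hq, rfl, hγ⟩
    exact ⟨u, w, ⟨hp, hq⟩, hγ⟩
  · rintro ⟨u, w, ⟨hp, hq⟩, hγ⟩
    exact ⟨_, u, w, hp, hq, rfl, hγ⟩

lemma treePathEdges_subset_edgeSet : treePathEdges T P r ⊆ T.edgeSet := by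
  rintro e ⟨u, w, -, p, -, he⟩
  exact p.edges_subset_edgeSet he

lemma treePathEdges_subset_of_reachable {H : SimpleGraph V} (hT : T.IsAcyclic) (hHT : H ≤ T)
    (hreach : ∀ u w, s(u, w) ∈ P → H.Reachable u r) : treePathEdges T P r ⊆ H.edgeSet := by
  rintro e ⟨u, w, huw, p, hp, he⟩
  exact hT.edges_subset_of_reachable_of_le hHT (hreach u w huw) hp e he

lemma edgeSet_fromEdgeSet_treePathEdges :
    (fromEdgeSet (treePathEdges T P r)).edgeSet = treePathEdges T P r :=
  edgeSet_fromEdgeSet_of_subset treePathEdges_subset_edgeSet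

lemma reachable_of_mem_support_treePathEdges {v : V}
    (hv : v ∈ (fromEdgeSet (treePathEdges T P r)).support) :
    (fromEdgeSet (treePathEdges T P r)).Reachable v r := by
  classical
  obtain ⟨w, hvw⟩ := hv
  obtain ⟨⟨u, u', huu', p, hp, hvw⟩, -⟩ := (fromEdgeSet_adj _).mp hvw
  have hpK : ∀ e ∈ p.edges, e ∈ (fromEdgeSet (treePathEdges T P r)).edgeSet := fun e he => by
    rw [edgeSet_fromEdgeSet_treePathEdges]
    exact ⟨u, u', huu', p, hp, he⟩
  exact ⟨(p.transfer _ hpK).dropUntil v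
    (by rw [Walk.support_transfer]; exact p.fst_mem_support_of_mem_edges hvw)⟩

lemma mem_support_treePathEdges {u w : V} (huw : s(u, w) ∈ P) (hur : u ≠ r)
    (hreach : T.Reachable u r) :
    u ∈ (fromEdgeSet (treePathEdges T P r)).support ∧
      r ∈ (fromEdgeSet (treePathEdges T P r)).support := by
  obtain ⟨p, hp⟩ := hreach.exists_isPath
  have hpK : ∀ e ∈ p.edges, e ∈ (fromEdgeSet (treePathEdges T P r)).edgeSet := fun e he => by
    rw [edgeSet_fromEdgeSet_treePathEdges]
    exact ⟨u, w, huw, p, hp, he⟩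
  have hK : (fromEdgeSet (treePathEdges T P r)).Reachable u r := ⟨p.transfer _ hpK⟩
  exact ⟨mem_support_of_reachable hur hK, mem_support_of_reachable hur.symm hK.symm⟩

lemma root_mem_support_treePathEdges {u w : V} (huw : s(u, w) ∈ P) (hne : u ≠ w)
    (hreach : ∀ u w, s(u, w) ∈ P → T.Reachable u r) :
    r ∈ (fromEdgeSet (treePathEdges T P r)).support := by
  by_cases hur : u = r
  · subst hur
    have hwu : s(w, u) ∈ P := Sym2.eq_swap ▸ huw
    exact (mem_support_treePathEdges hwu hne.symm (hreach w u hwu)).2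
  · exact (mem_support_treePathEdges huw hur (hreach u w huw)).2

lemma support_fromEdgeSet_union_treePathEdges
    (hreach : ∀ u w, s(u, w) ∈ P → T.Reachable u r) :
    (fromEdgeSet (P ∪ treePathEdges T P r)).support =
      (fromEdgeSet (treePathEdges T P r)).support := by
  refine (support_mono (fromEdgeSet_mono Set.subset_union_right)).antisymm' ?_
  rintro v ⟨w, hvw⟩
  obtain ⟨hvw | hvw, hne⟩ := (fromEdgeSet_adj _).mp hvw
  · by_cases hvr : v = r
    · rw [hvr]
      exact root_mem_support_treePathEdges hvw hne hreach
    · exact (mem_support_treePathEdges hvw hvr (hreach v w hvw)).1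
  · exact ⟨w, (fromEdgeSet_adj _).mpr ⟨hvw, hne⟩⟩

lemma reachable_fromEdgeSet_union_treePathEdges
    (hreach : ∀ u w, s(u, w) ∈ P → T.Reachable u r) {u v : V}
    (hu : u ∈ (fromEdgeSet (P ∪ treePathEdges T P r)).support)
    (hv : v ∈ (fromEdgeSet (P ∪ treePathEdges T P r)).support) :
    (fromEdgeSet (P ∪ treePathEdges T P r)).Reachable u v := by
  rw [support_fromEdgeSet_union_treePathEdges hreach] at hu hv
  exact ((reachable_of_mem_support_treePathEdges hu).trans
    (reachable_of_mem_support_treePathEdges hv).symm).mono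
    (fromEdgeSet_mono Set.subset_union_right)

theorem ncard_edgeSet_fromEdgeSet_union_treePathEdges [Finite V] {G : SimpleGraph V}
    (hT : T.IsAcyclic) (hTG : T ≤ G) (hPG : P ⊆ G.edgeSet) (hPT : Disjoint P T.edgeSet)
    (hP : P.Nonempty) (hreach : ∀ u w, s(u, w) ∈ P → T.Reachable u r) :
    (fromEdgeSet (P ∪ treePathEdges T P r)).edgeSet.ncard + 1 =
      P.ncard + (fromEdgeSet (P ∪ treePathEdges T P r)).support.ncard := by
  have hroot : r ∈ (fromEdgeSet (treePathEdges T P r)).support := by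
    obtain ⟨e, he⟩ := hP
    induction e using Sym2.ind with
    | _ u w => exact root_mem_support_treePathEdges he (G.ne_of_adj (hPG he)) hreach
  have hle : fromEdgeSet (treePathEdges T P r) ≤ T :=
    (fromEdgeSet_le T).mpr (Set.sdiff_subset.trans treePathEdges_subset_edgeSet)
  have htree := (hT.anti hle).ncard_edgeSet_add_one subset_rfl hroot
    fun _ => reachable_of_mem_support_treePathEdges
  rw [edgeSet_fromEdgeSet_treePathEdges] at htree
  rw [support_fromEdgeSet_union_treePathEdges hreach, ← htree, edgeSet_fromEdgeSet_of_subset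
    (Set.union_subset hPG (treePathEdges_subset_edgeSet.trans (edgeSet_subset_edgeSet.mpr hTG))),
    Set.ncard_union_eq (hPT.mono_right treePathEdges_subset_edgeSet), add_assoc]

end Reconstruction

theorem reconstructed_graph_connected_same_betti_general {V : Type*} [Fintype V]
    (G : SimpleGraph V) (f : V → ℝ)
    (lt : Sym2 V → Sym2 V → Prop)
    (hlt_irrefl : ∀ e ∈ G.edgeSet, ¬ lt e e)
    (hlt_trans : ∀ e₁ ∈ G.edgeSet, ∀ e₂ ∈ G.edgeSet, ∀ e₃ ∈ G.edgeSet,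
      lt e₁ e₂ → lt e₂ e₃ → lt e₁ e₃)
    (hlt_total : ∀ e₁ ∈ G.edgeSet, ∀ e₂ ∈ G.edgeSet, e₁ ≠ e₂ → lt e₁ e₂ ∨ lt e₂ e₁)
    (hlt_refine : ∀ e₁ ∈ G.edgeSet, ∀ e₂ ∈ G.edgeSet, fbar f e₁ < fbar f e₂ → lt e₁ e₂)
    (S : Set V) (β ν : ℝ) (hβν : 2 * ν < β) (hν : 0 ≤ ν)
    (hS : (G.induce S).Connected)
    (hfS : ∀ v ∈ S, f v ∈ Set.Icc (-β - ν) (-β))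
    (hfSc : ∀ v : V, v ∉ S → f v ∈ Set.Icc (-ν) 0)
    (v₀ : V) (hv₀ : ∀ w : V, f v₀ ≤ f w)
    (hcyc : ¬ (G.induce S).IsAcyclic) :
    ∀ T : SimpleGraph V, T = SimpleGraph.fromEdgeSet {e | IsNegEdge G lt e} →
    ∀ Ghat : SimpleGraph V,
      Ghat = SimpleGraph.fromEdgeSet
        ({e : Sym2 V | IsPosEdge G lt e ∧ ∀ v ∈ e, v ∈ S} ∪
         {e : Sym2 V | ∃ (e' : Sym2 V) (u w : V),
            IsPosEdge G lt e' ∧ (∀ v ∈ e', v ∈ S) ∧ e' = s(u, w) ∧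
            ∃ p : T.Walk u v₀, p.IsPath ∧ e ∈ p.edges}) →
      Ghat ≤ G ∧
      (∀ e ∈ Ghat.edgeSet, ∀ v ∈ e, v ∈ S) ∧
      (∀ u ∈ Ghat.support, ∀ w ∈ Ghat.support, Ghat.Reachable u w) ∧
      Ghat.edgeSet.ncard + S.ncard =
        {e : Sym2 V | e ∈ G.edgeSet ∧ ∀ v ∈ e, v ∈ S}.ncard + Ghat.support.ncard := by
  rintro T rfl Ghat rfl
  rw [setOf_exists_eq_treePathEdges]
  set P := {e : Sym2 V | IsPosEdge G lt e ∧ ∀ v ∈ e, v ∈ S}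
  have hβν' : -β < -ν := by linarith
  have hfS' : ∀ v ∈ S, f v ≤ -β := fun v hv => (hfS v hv).2
  have hfSc' : ∀ v ∉ S, -ν ≤ f v := fun v hv => (hfSc v hv).1
  have hv₀S : v₀ ∈ S := mem_of_forall_le_of_separated hβν' hfS' hfSc'
    (Set.nonempty_coe_sort.mp hS.nonempty) hv₀
  have hT := isAcyclic_fromEdgeSet_isNegEdge hlt_irrefl hlt_trans hlt_total
  have hreach : ∀ u ∈ S, (fromEdgeSet (negEdgesIn G lt S)).Reachable u v₀ := fun u hu =>
    reachable_negEdgesIn_of_separated hlt_irrefl hlt_trans hlt_refine hβν' hfS' hfSc'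
      hS.preconnected hu hv₀S
  have hPreach : ∀ u w, s(u, w) ∈ P → (fromEdgeSet (negEdgesIn G lt S)).Reachable u v₀ :=
    fun u w huw => hreach u (huw.2 u (Sym2.mem_mk_left u w))
  have hpath : treePathEdges _ P v₀ ⊆ negEdgesIn G lt S := edgeSet_fromEdgeSet_negEdgesIn ▸
    treePathEdges_subset_of_reachable hT fromEdgeSet_negEdgesIn_le hPreach
  have hTreach := fun u w huw => (hPreach u w huw).mono fromEdgeSet_negEdgesIn_le
  have hGhat := ncard_edgeSet_fromEdgeSet_union_treePathEdges (P := P) hT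
    ((fromEdgeSet_le G).mpr fun _ he => he.1.1) (fun _ he => he.1.1)
    (Set.disjoint_left.mpr fun _ he => he.1.notMem_edgeSet_fromEdgeSet)
    (exists_isPosEdge_of_not_isAcyclic_induce hT hcyc) hTreach
  have hN := ncard_negEdgesIn_add_one hT hv₀S hreach
  have hsplit : (negEdgesIn G lt S).ncard + P.ncard = _ := ncard_negEdgesIn_add_ncard_posEdgesIn
  refine ⟨(fromEdgeSet_le G).mpr (Set.sdiff_subset.trans
      (Set.union_subset (fun _ he => he.1.1) fun _ he => (hpath he).1.1)),
    fun e he => ((edgeSet_fromEdgeSet _).subset he).1.elim (·.2) (hpath · |>.2),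
    fun u hu w hw => reachable_fromEdgeSet_union_treePathEdges hTreach hu hw, by omega⟩

/-- Under the noise model, if `G[S]` contains a cycle, then the
reconstructed graph `Ĝ` (each positive edge in `S` together with the unique tree paths from
its endpoints to the global minimum `v₀`) is a connected subgraph of `G[S]`, and its first
Betti number equals that of `G[S]` (stated additively: `|E(Ĝ)| + |S| = |E(G[S])| + |V(Ĝ)|`).
-/
theorem reconstructed_graph_connected_same_betti {V : Type*} [Fintype V]
    (G : SimpleGraph V) (f : V → ℝ) (hf : Function.Injective f)
    (lt : Sym2 V → Sym2 V → Prop)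
    (hlt_irrefl : ∀ e ∈ G.edgeSet, ¬ lt e e)
    (hlt_trans : ∀ e₁ ∈ G.edgeSet, ∀ e₂ ∈ G.edgeSet, ∀ e₃ ∈ G.edgeSet,
      lt e₁ e₂ → lt e₂ e₃ → lt e₁ e₃)
    (hlt_total : ∀ e₁ ∈ G.edgeSet, ∀ e₂ ∈ G.edgeSet, e₁ ≠ e₂ → lt e₁ e₂ ∨ lt e₂ e₁)
    (hlt_refine : ∀ e₁ ∈ G.edgeSet, ∀ e₂ ∈ G.edgeSet, fbar f e₁ < fbar f e₂ → lt e₁ e₂)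
    (S : Set V) (β ν : ℝ) (hβν : 2 * ν < β) (hν : 0 ≤ ν)
    (hG : G.Connected) (hS : (G.induce S).Connected)
    (hfS : ∀ v ∈ S, f v ∈ Set.Icc (-β - ν) (-β))
    (hfSc : ∀ v : V, v ∉ S → f v ∈ Set.Icc (-ν) 0)
    (v₀ : V) (hv₀ : ∀ w : V, f v₀ ≤ f w)
    (hcyc : ¬ (G.induce S).IsAcyclic) :
    ∀ T : SimpleGraph V, T = SimpleGraph.fromEdgeSet {e | IsNegEdge G lt e} →
    ∀ Ghat : SimpleGraph V,
      Ghat = SimpleGraph.fromEdgeSet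
        ({e : Sym2 V | IsPosEdge G lt e ∧ ∀ v ∈ e, v ∈ S} ∪
         {e : Sym2 V | ∃ (e' : Sym2 V) (u w : V),
            IsPosEdge G lt e' ∧ (∀ v ∈ e', v ∈ S) ∧ e' = s(u, w) ∧
            ∃ p : T.Walk u v₀, p.IsPath ∧ e ∈ p.edges}) →
      Ghat ≤ G ∧
      (∀ e ∈ Ghat.edgeSet, ∀ v ∈ e, v ∈ S) ∧
      (∀ u ∈ Ghat.support, ∀ w ∈ Ghat.support, Ghat.Reachable u w) ∧
      Ghat.edgeSet.ncard + S.ncard =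
        {e : Sym2 V | e ∈ G.edgeSet ∧ ∀ v ∈ e, v ∈ S}.ncard + Ghat.support.ncard :=
  reconstructed_graph_connected_same_betti_general G f lt hlt_irrefl hlt_trans hlt_total hlt_refine
    S β ν hβν hν hS hfS hfSc v₀ hv₀ hcyc
end
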